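/- arXiv:2507.10068 — 2 statements merged into one kernel-verified Lean document; each statement's English description precedes it below -/
import Mathlib

section
/- For m ≥ 2 and 1 ≤ w ≤ m−1, the submatrix G_{m,w} of A₃^{⊗m} consisting of all rows of Hamming weight 2^w·3^{m−w} equals, up to row permutation, the vertical concatenation of (1,1,1) ⊗ G_{m−1,w}, (1,1,0) ⊗ G_{m−1,w−1}, and (1,0,1) ⊗ G_{m−1,w−1}. -/
open Finset

abbrev F2 := ZMod 2
abbrev F4 := GaloisField 2 2

def A3 : Matrix (ZMod 3) (ZMod 3) F2 := !![1,1,1; 1,1,0; 1,0,1]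

/-- The `m`-fold Kronecker power of `A3`, with rows and columns indexed by `Fin m → ZMod 3`. -/
def A3pow (m : ℕ) : Matrix (Fin m → ZMod 3) (Fin m → ZMod 3) F2 :=
  fun r c => ∏ i, A3 (r i) (c i)

/-- The DFT coefficient at frequency `j` as an `F2`-linear functional. -/
noncomputable def dftL (m : ℕ) (α : F4) (j : Fin m → ZMod 3) :
    ((Fin m → ZMod 3) → F2) →ₗ[F2] F4 :=
  ∑ i : Fin m → ZMod 3,
    α ^ (∑ l, i l * j l).val • ((Algebra.linearMap F2 F4).comp (LinearMap.proj i))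

/-- The abelian code with frequency weight set `W`. -/
noncomputable def abelianCode (m : ℕ) (α : F4) (W : Finset ℕ) :
    Submodule F2 ((Fin m → ZMod 3) → F2) :=
  ⨅ j ∈ {j : Fin m → ZMod 3 | hammingNorm j ∉ W}, LinearMap.ker (dftL m α j)

/-- The BiD code as the span of the rows of `A3pow m` with weight in the prescribed range. -/
noncomputable def BiD (m r₁ r₂ : ℕ) : Submodule F2 ((Fin m → ZMod 3) → F2) :=
  Submodule.span F2 {a | ∃ r, (2^r₂ * 3^(m-r₂) ≤ hammingNorm (A3pow m r) ∧
    hammingNorm (A3pow m r) ≤ 2^r₁ * 3^(m-r₁)) ∧ a = A3pow m r}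

/-- Minimum distance of a linear code. -/
noncomputable def minDist {m : ℕ} (C : Submodule F2 ((Fin m → ZMod 3) → F2)) : ℕ :=
  sInf {d : ℕ | ∃ a ∈ C, a ≠ 0 ∧ hammingNorm a = d}

/-!
The row of `A3^{⊗m}` indexed by `r` is the tensor product of the rows `A3 (r i)`, of weight
`3` if `r i = 0` and `2` otherwise; so its weight is `2^k 3^(m-k)` with `k` the number of
nonzero entries of `r`, and the rows of `G_{m,w}` are exactly those with `k = w`.
Splitting off the first entry `a ∈ {0, 1, 2}` of `r` gives the recursion, since the row
`Fin.cons a t` of `A3^{⊗(m+1)}` is `A3 a ⊗ (row t of A3^{⊗m})`, and `t` has `w` nonzero entries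
when `a = 0` and `w - 1` otherwise.
-/

theorem hammingNorm_prod_apply {ι κ R : Type*} [Fintype ι] [DecidableEq ι] [Fintype κ]
    [CommMonoidWithZero R] [Nontrivial R] [NoZeroDivisors R] [DecidableEq R]
    (f : ι → κ → R) :
    hammingNorm (fun c : ι → κ => ∏ i, f i (c i)) = ∏ i, hammingNorm (f i) := by
  have hsupp : ({c | ∏ i, f i (c i) ≠ 0} : Finset (ι → κ)) =
      Fintype.piFinset fun i => {a | f i a ≠ 0} := by
    ext c
    simp [Finset.prod_ne_zero_iff, Fintype.mem_piFinset]
  simp only [hammingNorm, hsupp, Fintype.card_piFinset]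

theorem hammingNorm_cons {β : Type*} [Zero β] [DecidableEq β] {m : ℕ} (a : β) (t : Fin m → β) :
    hammingNorm (Fin.cons a t : Fin (m + 1) → β) = hammingNorm t + if a = 0 then 0 else 1 := by
  simp [hammingNorm, Finset.card_filter, Fin.sum_univ_succ, add_comm]

theorem hammingNorm_A3 (a : ZMod 3) : hammingNorm (A3 a) = if a = 0 then 3 else 2 := by
  fin_cases a <;> decide

theorem hammingNorm_A3pow {m : ℕ} (r : Fin m → ZMod 3) :
    hammingNorm (A3pow m r) = 2 ^ hammingNorm r * 3 ^ (m - hammingNorm r) := by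
  have hzeros : #{i | r i = 0} = m - hammingNorm r := by
    have := Finset.card_filter_add_card_filter_not (s := univ) (fun i => r i = 0)
    simp only [card_univ, Fintype.card_fin] at this
    simp only [hammingNorm, ne_eq]
    omega
  rw [show A3pow m r = fun c => ∏ i, A3 (r i) (c i) from rfl, hammingNorm_prod_apply]
  simp only [hammingNorm_A3, Finset.prod_ite, Finset.prod_const, hzeros]
  simp [hammingNorm, mul_comm]

theorem factorization_two_pow_mul_three_pow (a b : ℕ) : (2 ^ a * 3 ^ b).factorization 2 = a := by
  rw [Nat.factorization_mul (by positivity) (by positivity)]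
  simp [Nat.prime_two.factorization, Nat.prime_three.factorization]

theorem hammingNorm_A3pow_eq_iff {m : ℕ} (r : Fin m → ZMod 3) (w : ℕ) :
    hammingNorm (A3pow m r) = 2 ^ w * 3 ^ (m - w) ↔ hammingNorm r = w := by
  refine ⟨fun h => ?_, fun h => by rw [hammingNorm_A3pow, h]⟩
  have := congrArg (fun n => n.factorization 2) ((hammingNorm_A3pow r).symm.trans h)
  simpa only [factorization_two_pow_mul_three_pow] using this

theorem A3pow_cons {m : ℕ} (a : ZMod 3) (t : Fin m → ZMod 3) :
    A3pow (m + 1) (Fin.cons a t : Fin (m + 1) → ZMod 3) =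
      fun c => A3 a (c 0) * A3pow m t (Fin.tail c) := by
  funext c
  exact Fin.prod_univ_succ fun i => A3 ((Fin.cons a t : Fin (m + 1) → ZMod 3) i) (c i)

/-- Index set of the rows of `G_{m,w}`; by `hammingNorm_A3pow_eq_iff` these are the `r`
with exactly `w` nonzero entries. -/
abbrev GIndex (m w : ℕ) : Type :=
  {r : Fin m → ZMod 3 // hammingNorm (A3pow m r) = 2 ^ w * 3 ^ (m - w)}

def consGIndex (m w : ℕ) : GIndex m (w + 1) ⊕ GIndex m w ⊕ GIndex m w → GIndex (m + 1) (w + 1) :=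
  Sum.elim (fun y => ⟨Fin.cons 0 y.1, (hammingNorm_A3pow_eq_iff _ _).2 <| by
      simp [hammingNorm_cons, (hammingNorm_A3pow_eq_iff _ _).1 y.2]⟩) <|
    Sum.elim (fun y => ⟨Fin.cons 1 y.1, (hammingNorm_A3pow_eq_iff _ _).2 <| by
        simp [hammingNorm_cons, (hammingNorm_A3pow_eq_iff _ _).1 y.2]⟩)
      (fun y => ⟨Fin.cons 2 y.1, (hammingNorm_A3pow_eq_iff _ _).2 <| by
        simp +decide [hammingNorm_cons, (hammingNorm_A3pow_eq_iff _ _).1 y.2]⟩)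

theorem consGIndex_injective (m w : ℕ) : Function.Injective (consGIndex m w) := by
  rintro (y | y | y) (z | z | z) h <;>
    simp_all +decide [consGIndex, Fin.cons_inj, Subtype.ext_iff]

theorem consGIndex_surjective (m w : ℕ) : Function.Surjective (consGIndex m w) := by
  rintro ⟨r, hr⟩
  rw [hammingNorm_A3pow_eq_iff, ← Fin.cons_self_tail r, hammingNorm_cons] at hr
  have htail (v : ℕ) (hv : hammingNorm (Fin.tail r) = v) :
      hammingNorm (A3pow m (Fin.tail r)) = 2 ^ v * 3 ^ (m - v) :=
    (hammingNorm_A3pow_eq_iff _ _).2 hv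
  have hr0 : r 0 = 0 ∨ r 0 = 1 ∨ r 0 = 2 := by generalize r 0 = a; decide +revert
  rcases hr0 with h0 | h0 | h0 <;> simp only [h0] at hr
  · exact ⟨.inl ⟨_, htail _ (by simpa using hr)⟩, by simp [consGIndex, ← h0]⟩
  · exact ⟨.inr (.inl ⟨_, htail _ (by simpa using hr)⟩), by simp [consGIndex, ← h0]⟩
  · exact ⟨.inr (.inr ⟨_, htail _ (by simpa +decide using hr)⟩),
      by simp [consGIndex, ← h0]⟩

theorem A3pow_consGIndex {m w : ℕ} (z : GIndex m (w + 1) ⊕ GIndex m w ⊕ GIndex m w) :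
    A3pow (m + 1) (consGIndex m w z).1 =
      Sum.elim (fun y => fun c => A3 0 (c 0) * A3pow m y.1 (Fin.tail c))
        (Sum.elim (fun y => fun c => A3 1 (c 0) * A3pow m y.1 (Fin.tail c))
          (fun y => fun c => A3 2 (c 0) * A3pow m y.1 (Fin.tail c))) z := by
  rcases z with y | y | y <;> exact A3pow_cons _ _

theorem G_recursion_general (m w : ℕ) (hw1 : 1 ≤ w) :
    ∃ e : {r : Fin (m+1) → ZMod 3 // hammingNorm (A3pow (m+1) r) = 2^w * 3^(m+1-w)} ≃
        ({r : Fin m → ZMod 3 // hammingNorm (A3pow m r) = 2^w * 3^(m-w)} ⊕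
         {r : Fin m → ZMod 3 // hammingNorm (A3pow m r) = 2^(w-1) * 3^(m-(w-1))} ⊕
         {r : Fin m → ZMod 3 // hammingNorm (A3pow m r) = 2^(w-1) * 3^(m-(w-1))}),
      ∀ x, A3pow (m+1) x.1 =
        Sum.elim
          (fun y => fun c => A3 0 (c 0) * A3pow m y.1 (Fin.tail c))
          (Sum.elim
            (fun y => fun c => A3 1 (c 0) * A3pow m y.1 (Fin.tail c))
            (fun y => fun c => A3 2 (c 0) * A3pow m y.1 (Fin.tail c)))
          (e x) := by
  obtain ⟨v, rfl⟩ := Nat.exists_eq_add_of_le' hw1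
  -- `v + 1 - 1` reduces to `v`, so the frozen index types are `GIndex` definitionally.
  have hbij : Function.Bijective (consGIndex m v) :=
    ⟨consGIndex_injective m v, consGIndex_surjective m v⟩
  refine ⟨(Equiv.ofBijective _ hbij).symm, fun x => ?_⟩
  conv_lhs => rw [← Equiv.ofBijective_apply_symm_apply _ hbij x]
  exact A3pow_consGIndex _

/-- For `m ≥ 2` and `1 ≤ w ≤ m - 1` (here phrased with length `m+1`, `1 ≤ w ≤ m`):
the submatrix `G_{m+1,w}` of `A3pow (m+1)` consisting of all rows of Hamming weight
`2^w * 3^(m+1-w)` equals, up to a permutation of rows, the vertical concatenation of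
`(1,1,1) ⊗ G_{m,w}`, `(1,1,0) ⊗ G_{m,w-1}` and `(1,0,1) ⊗ G_{m,w-1}`. -/
theorem G_recursion (m w : ℕ) (hw1 : 1 ≤ w) (hw2 : w ≤ m) :
    ∃ e : {r : Fin (m+1) → ZMod 3 // hammingNorm (A3pow (m+1) r) = 2^w * 3^(m+1-w)} ≃
        ({r : Fin m → ZMod 3 // hammingNorm (A3pow m r) = 2^w * 3^(m-w)} ⊕
         {r : Fin m → ZMod 3 // hammingNorm (A3pow m r) = 2^(w-1) * 3^(m-(w-1))} ⊕
         {r : Fin m → ZMod 3 // hammingNorm (A3pow m r) = 2^(w-1) * 3^(m-(w-1))}),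
      ∀ x, A3pow (m+1) x.1 =
        Sum.elim
          (fun y => fun c => A3 0 (c 0) * A3pow m y.1 (Fin.tail c))
          (Sum.elim
            (fun y => fun c => A3 1 (c 0) * A3pow m y.1 (Fin.tail c))
            (fun y => fun c => A3 2 (c 0) * A3pow m y.1 (Fin.tail c)))
          (e x) :=
  G_recursion_general m w hw1
end

section
/- Let d_m(W) denote the minimum distance of 𝒜(m,W). For W = {r₁,…,r₂} with 0 < r₁ ≤ r₂ < m, d_m(W) ≤ min{ D₂, 2·d_{m−1}(W₋₁,₋₁), 3·d_{m−1}(W) }, where D₂ = d_{m−1}({r₁,…,r₂−1}) if r₁ < r₂ and is omitted if r₁ = r₂, and W₋₁,₋₁ = {r₁−1,…,r₂−1}. -/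
open Finset

/-! Split off the first coordinate, `j = (j₀, j')`. The DFT of a product word
`f ⊗ b : (x, i) ↦ f x * b i` factors as `f̂(j₀) · b̂(j')`, and `wt j = wt j' + [j₀ ≠ 0]`.
For `f = δ₀ = (1,0,0)`, `1 - δ₀ = (0,1,1)` and `1 = (1,1,1)`, of weights `1, 2, 3`, the factor
`f̂(j₀)` is `1`, `[j₀ ≠ 0]` and `[j₀ = 0]`, so `f ⊗ b ∈ 𝒜(m, [r₁, r₂])` as soon as `b` lies in
`𝒜(m-1, ·)` of `[r₁, r₂-1]`, `[r₁-1, r₂-1]` and `[r₁, r₂]` respectively. Taking `b` of minimum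
weight gives the three bounds. These codes must be shown to be nonzero (`minDist ⊥ = sInf ∅ = 0`):
`𝒜(n, W)` contains `(0,1,1)^{⊗w} ⊗ (1,1,1)^{⊗(n-w)} ≠ 0` for each `w ∈ W` with `w ≤ n`. -/

lemma pow_zmod_val_add {M : Type*} [Monoid M] {n : ℕ} [NeZero n] {a : M} (ha : a ^ n = 1)
    (x y : ZMod n) : a ^ (x + y).val = a ^ x.val * a ^ y.val := by
  rw [ZMod.val_add, ← pow_eq_pow_mod _ ha, pow_add]

lemma ZMod.sum_univ_three {M : Type*} [AddCommMonoid M] (F : ZMod 3 → M) :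
    ∑ x, F x = F 0 + F 1 + F 2 :=
  Fin.sum_univ_three F

lemma hammingNorm_fin_succ {β : Type*} [Zero β] [DecidableEq β] {n : ℕ} (j : Fin (n + 1) → β) :
    hammingNorm j = if j 0 ≠ 0 then hammingNorm (Fin.tail j) + 1 else hammingNorm (Fin.tail j) :=
  Fin.card_filter_univ_succ _

section Tensor

variable {ι R : Type*}

def tensorCons [Mul R] {n : ℕ} (f : ι → R) (b : (Fin n → ι) → R) : (Fin (n + 1) → ι) → R :=
  fun i => f (i 0) * b (Fin.tail i)

lemma sum_fin_succ_pi {M : Type*} [Fintype ι] [AddCommMonoid M] {n : ℕ}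
    (F : (Fin (n + 1) → ι) → M) : ∑ i, F i = ∑ x, ∑ i, F (Fin.cons x i) := by
  rw [← Fintype.sum_prod_type']
  exact (Fintype.sum_equiv (Fin.consEquiv fun _ => ι) _ _ fun _ => rfl).symm

lemma hammingNorm_tensorCons [Fintype ι] [MulZeroClass R] [NoZeroDivisors R] [DecidableEq R]
    {n : ℕ} (f : ι → R) (b : (Fin n → ι) → R) :
    hammingNorm (tensorCons f b) = hammingNorm f * hammingNorm b := by
  simp only [hammingNorm, Finset.card_filter, Finset.sum_mul_sum]
  rw [sum_fin_succ_pi]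
  refine Finset.sum_congr rfl fun x _ => Finset.sum_congr rfl fun i _ => ?_
  by_cases hf : f x = 0 <;> by_cases hb : b i = 0 <;> simp [tensorCons, hf, hb]

lemma tensorCons_ne_zero [MulZeroClass R] [NoZeroDivisors R] {n : ℕ}
    {f : ι → R} {b : (Fin n → ι) → R} (hf : f ≠ 0) (hb : b ≠ 0) : tensorCons f b ≠ 0 := by
  obtain ⟨x, hx⟩ := Function.ne_iff.mp hf
  obtain ⟨i, hi⟩ := Function.ne_iff.mp hb
  refine Function.ne_iff.mpr ⟨Fin.cons x i, ?_⟩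
  simpa [tensorCons] using mul_ne_zero hx hi

end Tensor

noncomputable def dft3 (α : F4) (f : ZMod 3 → F2) (k : ZMod 3) : F4 :=
  ∑ x, α ^ (x * k).val * algebraMap F2 F4 (f x)

lemma dftL_apply (m : ℕ) (α : F4) (j : Fin m → ZMod 3) (a : (Fin m → ZMod 3) → F2) :
    dftL m α j a = ∑ i, α ^ (∑ l, i l * j l).val * algebraMap F2 F4 (a i) := by
  simp [dftL, LinearMap.sum_apply, smul_eq_mul]

lemma dftL_tensorCons {α : F4} (hα : α ^ 3 = 1) {n : ℕ} (f : ZMod 3 → F2)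
    (b : (Fin n → ZMod 3) → F2) (j : Fin (n + 1) → ZMod 3) :
    dftL (n + 1) α j (tensorCons f b) = dft3 α f (j 0) * dftL n α (Fin.tail j) b := by
  rw [dftL_apply, dftL_apply, dft3, Finset.sum_mul_sum, sum_fin_succ_pi]
  refine Finset.sum_congr rfl fun x _ => Finset.sum_congr rfl fun i _ => ?_
  rw [tensorCons, Fin.sum_univ_succ, pow_zmod_val_add hα, map_mul]
  simp only [Fin.cons_zero, Fin.tail_cons, Fin.cons_succ, Fin.tail]
  ring

lemma dft3_single (α : F4) (k : ZMod 3) : dft3 α (Pi.single 0 1) k = 1 := by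
  simp [dft3, Pi.single_apply]

lemma dft3_one {α : F4} (hα : IsPrimitiveRoot α 3) (k : ZMod 3) :
    dft3 α 1 k = if k = 0 then 1 else 0 := by
  have hsum : 1 + α + α ^ 2 = 0 := by
    simpa [Finset.sum_range_succ] using hα.geom_sum_eq_zero (by norm_num)
  have hv : (2 : ZMod 3).val = 2 ∧ ((2 : ZMod 3) * 2).val = 1 ∧ (2 : ZMod 3) ≠ 0 := by decide
  obtain rfl | rfl | rfl : k = 0 ∨ k = 1 ∨ k = 2 := by revert k; decide
  · have h3 : (3 : F4) = 1 := by linear_combination CharTwo.two_eq_zero (R := F4)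
    simpa [dft3] using h3
  · simpa [dft3, ZMod.sum_univ_three, ZMod.val_one, hv] using hsum
  · simpa [dft3, ZMod.sum_univ_three, hv, add_right_comm] using hsum

lemma dft3_sub (α : F4) (f g : ZMod 3 → F2) (k : ZMod 3) :
    dft3 α (f - g) k = dft3 α f k - dft3 α g k := by
  simp [dft3, mul_sub, Finset.sum_sub_distrib]

lemma dft3_one_sub_single {α : F4} (hα : IsPrimitiveRoot α 3) (k : ZMod 3) :
    dft3 α (1 - Pi.single 0 1) k = if k = 0 then 0 else 1 := by
  rw [dft3_sub, dft3_one hα, dft3_single]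
  split_ifs
  · exact sub_self 1
  · rw [zero_sub, CharTwo.neg_eq]

lemma mem_abelianCode {m : ℕ} {α : F4} {W : Finset ℕ} {a : (Fin m → ZMod 3) → F2} :
    a ∈ abelianCode m α W ↔ ∀ j, hammingNorm j ∉ W → dftL m α j a = 0 := by
  simp [abelianCode, Submodule.mem_iInf, LinearMap.mem_ker]

section Extension

variable {α : F4} {n : ℕ} {V W : Finset ℕ} {b : (Fin n → ZMod 3) → F2}

lemma tensorCons_one_mem (hα : IsPrimitiveRoot α 3) (hb : b ∈ abelianCode n α W) :
    tensorCons 1 b ∈ abelianCode (n + 1) α W := by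
  refine mem_abelianCode.mpr fun j hj => ?_
  rw [dftL_tensorCons hα.pow_eq_one, dft3_one hα]
  split_ifs with h0
  · rw [hammingNorm_fin_succ, if_neg (not_not_intro h0)] at hj
    rw [one_mul, mem_abelianCode.mp hb _ hj]
  · exact zero_mul _

lemma tensorCons_one_sub_single_mem (hα : IsPrimitiveRoot α 3) (hb : b ∈ abelianCode n α V)
    (hVW : ∀ w ∈ V, w + 1 ∈ W) :
    tensorCons (1 - Pi.single 0 1) b ∈ abelianCode (n + 1) α W := by
  refine mem_abelianCode.mpr fun j hj => ?_
  rw [dftL_tensorCons hα.pow_eq_one, dft3_one_sub_single hα]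
  split_ifs with h0
  · exact zero_mul _
  · rw [hammingNorm_fin_succ, if_pos h0] at hj
    rw [one_mul, mem_abelianCode.mp hb _ fun hV => hj (hVW _ hV)]

lemma tensorCons_single_mem (hα : IsPrimitiveRoot α 3) (hb : b ∈ abelianCode n α V)
    (hVW : ∀ w ∈ V, w ∈ W ∧ w + 1 ∈ W) :
    tensorCons (Pi.single 0 1) b ∈ abelianCode (n + 1) α W := by
  refine mem_abelianCode.mpr fun j hj => ?_
  rw [dftL_tensorCons hα.pow_eq_one, dft3_single, one_mul]
  refine mem_abelianCode.mp hb _ fun hV => hj ?_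
  rw [hammingNorm_fin_succ]
  split_ifs
  exacts [(hVW _ hV).2, (hVW _ hV).1]

end Extension

lemma abelianCode_ne_bot {α : F4} (hα : IsPrimitiveRoot α 3) {n w : ℕ} {W : Finset ℕ}
    (hwn : w ≤ n) (hw : w ∈ W) : abelianCode n α W ≠ ⊥ := by
  rw [Submodule.ne_bot_iff]
  induction n generalizing w W with
  | zero =>
    refine ⟨1, mem_abelianCode.mpr fun j hj => absurd ?_ hj, one_ne_zero⟩
    rwa [hammingNorm_eq_zero.mpr (Subsingleton.elim j 0), ← Nat.le_zero.mp hwn]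
  | succ n ih =>
    obtain hwn | rfl := Nat.le_succ_iff.mp hwn
    · obtain ⟨b, hb, hb0⟩ := ih hwn hw
      exact ⟨_, tensorCons_one_mem hα hb, tensorCons_ne_zero one_ne_zero hb0⟩
    · obtain ⟨b, hb, hb0⟩ := ih le_rfl (Finset.mem_singleton_self n)
      refine ⟨_, tensorCons_one_sub_single_mem hα hb ?_, tensorCons_ne_zero ?_ hb0⟩
      · simpa using hw
      · decide

lemma hammingNorm_single : hammingNorm (Pi.single 0 1 : ZMod 3 → F2) = 1 := by decide

lemma hammingNorm_one_sub_single : hammingNorm (1 - Pi.single 0 1 : ZMod 3 → F2) = 2 := by decide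

lemma hammingNorm_one : hammingNorm (1 : ZMod 3 → F2) = 3 := by decide

lemma minDist_le_hammingNorm {m : ℕ} {C : Submodule F2 ((Fin m → ZMod 3) → F2)}
    {a : (Fin m → ZMod 3) → F2} (ha : a ∈ C) (ha0 : a ≠ 0) : minDist C ≤ hammingNorm a :=
  Nat.sInf_le ⟨a, ha, ha0, rfl⟩

lemma exists_hammingNorm_eq_minDist {m : ℕ} {C : Submodule F2 ((Fin m → ZMod 3) → F2)}
    (hC : C ≠ ⊥) : ∃ a ∈ C, a ≠ 0 ∧ hammingNorm a = minDist C := by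
  obtain ⟨a, ha, ha0⟩ := Submodule.exists_mem_ne_zero_of_ne_bot hC
  exact Nat.sInf_mem (s := {d | ∃ a ∈ C, a ≠ 0 ∧ hammingNorm a = d}) ⟨_, a, ha, ha0, rfl⟩

lemma minDist_le_hammingNorm_mul_minDist {n : ℕ} {C : Submodule F2 ((Fin (n + 1) → ZMod 3) → F2)}
    {D : Submodule F2 ((Fin n → ZMod 3) → F2)} (hD : D ≠ ⊥) {f : ZMod 3 → F2} (hf : f ≠ 0)
    (hfD : ∀ b ∈ D, tensorCons f b ∈ C) : minDist C ≤ hammingNorm f * minDist D := by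
  obtain ⟨b, hb, hb0, hbD⟩ := exists_hammingNorm_eq_minDist hD
  rw [← hbD, ← hammingNorm_tensorCons]
  exact minDist_le_hammingNorm (hfD b hb) (tensorCons_ne_zero hf hb0)

/-- Recursive upper bound on the minimum distance of `𝒜(m,{r₁,…,r₂})` for
`0 < r₁ ≤ r₂ < m` (the `D₂` term is omitted, i.e. `+∞`, when `r₁ = r₂`). -/
theorem minDist_recursive_upper_bound (m r₁ r₂ : ℕ) (h0 : 0 < r₁) (h12 : r₁ ≤ r₂)
    (h2m : r₂ < m) (α : F4) (hα : orderOf α = 3) :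
    (minDist (abelianCode m α (Finset.Icc r₁ r₂)) : ℕ∞)
      ≤ min (if r₁ < r₂ then (minDist (abelianCode (m-1) α (Finset.Icc r₁ (r₂-1))) : ℕ∞) else ⊤)
          (min (2 * (minDist (abelianCode (m-1) α (Finset.Icc (r₁-1) (r₂-1))) : ℕ∞))
            (3 * (minDist (abelianCode (m-1) α (Finset.Icc r₁ r₂)) : ℕ∞))) := by
  obtain ⟨n, rfl⟩ : ∃ n, m = n + 1 := ⟨m - 1, by omega⟩
  have hα' : IsPrimitiveRoot α 3 := hα ▸ IsPrimitiveRoot.orderOf α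
  have hne {V : Finset ℕ} {w : ℕ} (hw : w ∈ V) (hwn : w ≤ n) := abelianCode_ne_bot hα' hwn hw
  rw [Nat.add_sub_cancel]
  set C := abelianCode (n + 1) α (Finset.Icc r₁ r₂)
  have hD₂ (h : r₁ < r₂) : minDist C ≤ minDist (abelianCode n α (Finset.Icc r₁ (r₂ - 1))) := by
    simpa only [hammingNorm_single, one_mul] using minDist_le_hammingNorm_mul_minDist (C := C)
      (hne (Finset.left_mem_Icc.mpr (by omega)) (by omega)) (by decide)
      fun b hb => tensorCons_single_mem hα' hb fun w hw => by simp only [Finset.mem_Icc] at hw ⊢; omega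
  have h2 : minDist C ≤ 2 * minDist (abelianCode n α (Finset.Icc (r₁ - 1) (r₂ - 1))) := by
    simpa only [hammingNorm_one_sub_single] using minDist_le_hammingNorm_mul_minDist (C := C)
      (hne (Finset.left_mem_Icc.mpr (by omega)) (by omega)) (by decide)
      fun b hb => tensorCons_one_sub_single_mem hα' hb fun w hw => by simp only [Finset.mem_Icc] at hw ⊢; omega
  have h3 : minDist C ≤ 3 * minDist (abelianCode n α (Finset.Icc r₁ r₂)) := by
    simpa only [hammingNorm_one] using minDist_le_hammingNorm_mul_minDist (C := C)
      (hne (Finset.left_mem_Icc.mpr h12) (by omega)) (by decide)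
      fun b hb => tensorCons_one_mem hα' hb
  refine le_min ?_ (le_min (by exact_mod_cast h2) (by exact_mod_cast h3))
  split_ifs with h
  exacts [by exact_mod_cast hD₂ h, le_top]
end
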